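/- arXiv:2012.00979 — 4 statements merged into one kernel-verified Lean document; each statement's English description precedes it below -/
import Mathlib

section
/- Let G be an abelian group of order v, and D a k-subset of G not containing the identity. Let λ, μ be nonnegative integers satisfying k² = k - μ + (λ-μ)k + μv and (λ-μ)² + 4(k-μ) ≥ 0. Then D is a regular (v,k,λ,μ) partial difference set in G if and only if for every nonprincipal character χ of G, the character sum χ(D) equals (λ-μ ± √((λ-μ)²+4(k-μ)))/2. -/
open Finset BigOperators

variable {G : Type*}

/-- Number of ordered pairs `(x,y)` with `x,y ∈ D`, `x ≠ y`, `x * y⁻¹ = g`. -/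
noncomputable def diffCount [Group G] (D : Set G) (g : G) : ℕ :=
  Nat.card {p : G × G // p.1 ∈ D ∧ p.2 ∈ D ∧ p.1 ≠ p.2 ∧ p.1 * p.2⁻¹ = g}

/-- `D` is a `(v,k,λ,μ)` partial difference set in `G`. -/
def IsPDS [Group G] (D : Set G) (v k : ℕ) (l m : ℤ) : Prop :=
  Nat.card G = v ∧ Nat.card D = k ∧
    ∀ g : G, g ≠ 1 →
      (g ∈ D → (diffCount D g : ℤ) = l) ∧ (g ∉ D → (diffCount D g : ℤ) = m)

/-- A regular PDS: a PDS avoiding the identity and closed under inversion. -/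
def IsRegularPDS [Group G] (D : Set G) (v k : ℕ) (l m : ℤ) : Prop :=
  IsPDS D v k l m ∧ (1 : G) ∉ D ∧ D⁻¹ = D

/-- A regular `(n,r)` Latin square type PDS. -/
def IsLatinPDS [Group G] (D : Set G) (n r : ℕ) : Prop :=
  IsRegularPDS D (n ^ 2) (r * (n - 1)) ((n : ℤ) + (r : ℤ) ^ 2 - 3 * r) ((r : ℤ) ^ 2 - r)

/-- A regular `(n,r)` negative Latin square type PDS. -/
def IsNegLatinPDS [Group G] (D : Set G) (n r : ℕ) : Prop :=
  IsRegularPDS D (n ^ 2) (r * (n + 1)) (-(n : ℤ) + (r : ℤ) ^ 2 + 3 * r) ((r : ℤ) ^ 2 + r)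

/-- Character sum `χ(D) = ∑_{d ∈ D} χ(d)`. -/
noncomputable def charSum [Group G] (χ : G →* ℂˣ) (D : Set G) : ℂ :=
  ∑ᶠ d ∈ D, (χ d : ℂ)

/-- The multiset of character sums `{χ(P 0), …, χ(P (t-1))}`. -/
noncomputable def charMultiset [Group G] {t : ℕ} (χ : G →* ℂˣ) (P : Fin t → Set G) :
    Multiset ℂ :=
  (Finset.univ.val : Multiset (Fin t)).map fun i => charSum χ (P i)

/-- `χ` is principal on the subgroup `U`. -/
def IsPrincipalOn [Group G] (χ : G →* ℂˣ) (U : Subgroup G) : Prop :=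
  ∀ u ∈ U, χ u = 1

/-- A `(c,t)` LP-packing in `G` relative to `U`. -/
def IsLPPacking [CommGroup G] (c t : ℕ) (P : Fin t → Set G) (U : Subgroup G) : Prop :=
  Nat.card G = t ^ 2 * c ^ 2 ∧ Nat.card U = t * c ∧
    (∀ i, IsLatinPDS (P i) (t * c) c) ∧
    (∀ i j, i ≠ j → Disjoint (P i) (P j)) ∧
    (⋃ i, P i) = Set.univ \ (U : Set G)

/-- A `(c,t-1)` NLP-packing in `G`. -/
def IsNLPPacking [CommGroup G] (c t : ℕ) (P : Fin (t - 1) → Set G) : Prop :=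
  Nat.card G = t ^ 2 * c ^ 2 ∧
    (∀ i, IsNegLatinPDS (P i) (t * c) c) ∧
    IsNegLatinPDS (Set.univ \ ({1} ∪ ⋃ i, P i)) (t * c) (c - 1)

/-- A `(c,t)` LP-partition in `G − V` relative to `H`. -/
def IsLPPartition [CommGroup G] (c t : ℕ) (R : Fin t → Set G) (V H : Subgroup G) : Prop :=
  Nat.card G = t ^ 2 * c ^ 2 ∧ Nat.card V = t * c ^ 2 ∧ H ≤ V ∧
    (∀ i, Nat.card (R i) = (t - 1) * c ^ 2) ∧
    (∀ i j, i ≠ j → Disjoint (R i) (R j)) ∧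
    (⋃ i, R i) = Set.univ \ (V : Set G) ∧
    ∀ χ : G →* ℂˣ, χ ≠ 1 →
      (IsPrincipalOn χ V → charMultiset χ R = Multiset.replicate t (-(c : ℂ) ^ 2)) ∧
      (¬ IsPrincipalOn χ V → IsPrincipalOn χ H →
        charMultiset χ R = Multiset.replicate t 0) ∧
      (¬ IsPrincipalOn χ H →
        charMultiset χ R = ((t : ℂ) - 1) * (c : ℂ) ::ₘ Multiset.replicate (t - 1) (-(c : ℂ)))


section AuxPDS

lemma aux_sum_char_eq_zero [CommGroup G] [Fintype G] (χ : G →* ℂˣ) (hχ : χ ≠ 1) :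
    ∑ g : G, (χ g : ℂ) = 0 := by
  obtain ⟨a, ha⟩ : ∃ a : G, χ a ≠ 1 := by
    by_contra hcon
    push_neg at hcon
    exact hχ (MonoidHom.ext fun x => hcon x)
  have h1 : ((χ a : ℂˣ) : ℂ) ≠ 1 := fun hh => ha (Units.ext (by simpa using hh))
  have h2 : ∑ g : G, ((χ (a * g) : ℂˣ) : ℂ) = ∑ g : G, (χ g : ℂ) :=
    Fintype.sum_equiv (Equiv.mulLeft a) _ _ (fun g => by simp)
  have h3 : ∑ g : G, ((χ (a * g) : ℂˣ) : ℂ) = ((χ a : ℂˣ) : ℂ) * ∑ g : G, (χ g : ℂ) := by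
    rw [Finset.mul_sum]
    exact Finset.sum_congr rfl fun g _ => by rw [map_mul]; push_cast; ring
  have h4 : (((χ a : ℂˣ) : ℂ) - 1) * ∑ g : G, (χ g : ℂ) = 0 := by
    rw [sub_mul, one_mul, ← h3, h2, sub_self]
  rcases mul_eq_zero.mp h4 with h | h
  · exact absurd (by linear_combination h) h1
  · exact h

lemma aux_exists_char [CommGroup G] [Finite G] {a : G} (ha : a ≠ 1) :
    ∃ χ : G →* ℂˣ, χ a ≠ 1 :=
  CommGroup.exists_apply_ne_one_of_hasEnoughRootsOfUnity G ℂ ha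

lemma aux_dual_finite [CommGroup G] [Finite G] : Finite (G →* ℂˣ) := by
  obtain ⟨e⟩ := CommGroup.monoidHom_mulEquiv_of_hasEnoughRootsOfUnity G ℂ
  exact Finite.of_equiv G e.symm.toEquiv

lemma aux_sum_dual [CommGroup G] [Finite G] [Fintype (G →* ℂˣ)] {g : G} (hg : g ≠ 1) :
    ∑ χ : G →* ℂˣ, (χ g : ℂ) = 0 := by
  let ev : (G →* ℂˣ) →* ℂˣ :=
    { toFun := fun χ => χ g, map_one' := rfl, map_mul' := fun χ ψ => rfl }
  have hev : ev ≠ 1 := by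
    obtain ⟨χ, hχ⟩ := aux_exists_char hg
    intro hh
    exact hχ (by simpa [ev] using DFunLike.congr_fun hh χ)
  exact aux_sum_char_eq_zero ev hev

lemma aux_inversion [CommGroup G] [Finite G] [Fintype G] [Fintype (G →* ℂˣ)] (f f' : G → ℂ)
    (h : ∀ χ : G →* ℂˣ, ∑ g : G, f g * χ g = ∑ g : G, f' g * χ g) : f = f' := by
  classical
  funext a
  have key : ∀ F : G → ℂ, ∑ χ : G →* ℂˣ, (∑ g : G, F g * χ g) * (χ a⁻¹ : ℂ)
      = (Fintype.card (G →* ℂˣ) : ℂ) * F a := by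
    intro F
    have e1 : ∀ χ : G →* ℂˣ, (∑ g : G, F g * χ g) * (χ a⁻¹ : ℂ)
        = ∑ g : G, F g * (χ (g * a⁻¹) : ℂ) := by
      intro χ
      rw [Finset.sum_mul]
      exact Finset.sum_congr rfl fun g _ => by rw [map_mul]; push_cast; ring
    calc ∑ χ : G →* ℂˣ, (∑ g : G, F g * χ g) * (χ a⁻¹ : ℂ)
        = ∑ χ : G →* ℂˣ, ∑ g : G, F g * (χ (g * a⁻¹) : ℂ) :=
          Finset.sum_congr rfl fun χ _ => e1 χ
      _ = ∑ g : G, ∑ χ : G →* ℂˣ, F g * (χ (g * a⁻¹) : ℂ) := Finset.sum_comm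
      _ = ∑ g : G, F g * ∑ χ : G →* ℂˣ, (χ (g * a⁻¹) : ℂ) := by
          exact Finset.sum_congr rfl fun g _ => (Finset.mul_sum _ _ _).symm
      _ = (Fintype.card (G →* ℂˣ) : ℂ) * F a := by
          rw [Finset.sum_eq_single a]
          · simp [mul_comm]
          · intro g _ hga
            rw [aux_sum_dual (by simpa [mul_inv_eq_one] using hga), mul_zero]
          · simp
  have hcard : (Fintype.card (G →* ℂˣ) : ℂ) ≠ 0 := by
    haveI : Nonempty (G →* ℂˣ) := ⟨1⟩
    exact_mod_cast Fintype.card_ne_zero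
  have h2 : (Fintype.card (G →* ℂˣ) : ℂ) * f a = (Fintype.card (G →* ℂˣ) : ℂ) * f' a := by
    rw [← key f, ← key f']
    exact Finset.sum_congr rfl fun χ _ => by rw [h χ]
  exact mul_left_cancel₀ hcard h2

end AuxPDS

theorem stmt_0 {G : Type*} [CommGroup G] [Finite G] (v k l m : ℕ) (D : Set G)
    (hv : Nat.card G = v) (hk : Nat.card D = k) (h1 : (1 : G) ∉ D)
    (heq : (k : ℤ) ^ 2 = (k : ℤ) - m + ((l : ℤ) - m) * k + m * v)
    (hge : (0 : ℤ) ≤ ((l : ℤ) - m) ^ 2 + 4 * ((k : ℤ) - m)) :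
    IsRegularPDS D v k (l : ℤ) (m : ℤ) ↔
      ∀ χ : G →* ℂˣ, χ ≠ 1 →
        charSum χ D =
            (((((l : ℝ) - m) + Real.sqrt (((l : ℝ) - m) ^ 2 + 4 * ((k : ℝ) - m))) / 2 : ℝ) : ℂ) ∨
        charSum χ D =
            (((((l : ℝ) - m) - Real.sqrt (((l : ℝ) - m) ^ 2 + 4 * ((k : ℝ) - m))) / 2 : ℝ) : ℂ) := by
  classical
  cases nonempty_fintype G
  haveI : Fintype (G →* ℂˣ) := @Fintype.ofFinite _ (aux_dual_finite (G := G))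
  -- the finset underlying D
  set S : Finset G := D.toFinite.toFinset with hSdef
  have hmemS : ∀ x : G, x ∈ S ↔ x ∈ D := fun x => Set.Finite.mem_toFinset _
  have hcardS : S.card = k := by
    rw [← hk, Nat.card_coe_set_eq, Set.ncard_eq_toFinset_card D D.toFinite]
  -- character sums as finset sums
  set cs : (G →* ℂˣ) → ℂ := fun χ => ∑ x ∈ S, (χ x : ℂ) with hcsdef
  have hcs : ∀ χ : G →* ℂˣ, charSum χ D = cs χ := by
    intro χ
    rw [charSum, ← Set.Finite.coe_toFinset D.toFinite, finsum_mem_coe_finset]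
  have hcs1 : cs 1 = (k : ℂ) := by simp [hcsdef, hcardS]
  -- real quantities
  set b : ℝ := (l : ℝ) - m with hbdef
  set c : ℝ := (k : ℝ) - m with hcdef
  set s : ℝ := Real.sqrt (b ^ 2 + 4 * c) with hsdef
  have hs : s ^ 2 = b ^ 2 + 4 * c := by
    rw [hsdef]
    refine Real.sq_sqrt ?_
    have : ((0 : ℤ) : ℝ) ≤ ((((l : ℤ) - m) ^ 2 + 4 * ((k : ℤ) - m) : ℤ) : ℝ) := by
      exact_mod_cast hge
    push_cast at this
    rw [hbdef, hcdef]; linarith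
  have hsC : ((s : ℂ)) ^ 2 = (b : ℂ) ^ 2 + 4 * (c : ℂ) := by exact_mod_cast congrArg Complex.ofReal hs
  -- diffCount as a finset card
  set Q : G → Finset (G × G) :=
    fun g => (S ×ˢ S).filter (fun p => ¬ p.1 = p.2 ∧ p.1 * p.2⁻¹ = g) with hQdef
  have hdc : ∀ g : G, diffCount D g = (Q g).card := by
    intro g
    rw [diffCount, Nat.card_eq_fintype_card, Fintype.card_subtype]
    congr 1
    ext p
    simp only [hQdef, Finset.mem_filter, Finset.mem_product, Finset.mem_univ, true_and, hmemS]
    tauto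
  -- the key identity
  have key : ∀ χ : G →* ℂˣ, (cs χ) * (∑ x ∈ S, (χ x⁻¹ : ℂ)) =
      (k : ℂ) + ∑ g : G, (diffCount D g : ℂ) * (χ g : ℂ) := by
    intro χ
    have e1 : cs χ * ∑ x ∈ S, (χ x⁻¹ : ℂ) = ∑ p ∈ S ×ˢ S, (χ (p.1 * p.2⁻¹) : ℂ) := by
      rw [hcsdef, Finset.sum_mul_sum, ← Finset.sum_product']
      exact Finset.sum_congr rfl fun p _ => by rw [map_mul]; push_cast; ring
    have e2 : ∑ p ∈ (S ×ˢ S).filter (fun p => p.1 = p.2), (χ (p.1 * p.2⁻¹) : ℂ)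
        = (k : ℂ) := by
      have hconst : ∀ p ∈ (S ×ˢ S).filter (fun p => p.1 = p.2), (χ (p.1 * p.2⁻¹) : ℂ) = 1 := by
        intro p hp
        have := (Finset.mem_filter.mp hp).2
        simp [this]
      have himg : (S ×ˢ S).filter (fun p => p.1 = p.2) = S.image (fun x => (x, x)) := by
        ext p
        simp only [Finset.mem_filter, Finset.mem_product, Finset.mem_image]
        constructor
        · rintro ⟨⟨hp1, _⟩, hpe⟩
          exact ⟨p.1, hp1, by simp [Prod.ext_iff, hpe]⟩
        · rintro ⟨x, hx, rfl⟩
          exact ⟨⟨hx, hx⟩, rfl⟩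
      rw [Finset.sum_congr rfl hconst, Finset.sum_const, nsmul_eq_mul, mul_one, himg,
        Finset.card_image_of_injective _ (fun x y hxy => by simpa using congrArg Prod.fst hxy),
        hcardS]
    have e3 : ∑ p ∈ (S ×ˢ S).filter (fun p => ¬ p.1 = p.2), (χ (p.1 * p.2⁻¹) : ℂ)
        = ∑ g : G, (diffCount D g : ℂ) * (χ g : ℂ) := by
      rw [← Finset.sum_fiberwise ((S ×ˢ S).filter (fun p => ¬ p.1 = p.2))
        (fun p => p.1 * p.2⁻¹) (fun p => (χ (p.1 * p.2⁻¹) : ℂ))]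
      refine Finset.sum_congr rfl fun g _ => ?_
      rw [Finset.filter_filter, hdc g]
      have hQg : ((S ×ˢ S).filter fun p => ¬ p.1 = p.2 ∧ p.1 * p.2⁻¹ = g) = Q g := rfl
      rw [hQg]
      have hconst : ∀ p ∈ Q g, (χ (p.1 * p.2⁻¹) : ℂ) = (χ g : ℂ) := by
        intro p hp
        rw [(Finset.mem_filter.mp hp).2.2]
      rw [Finset.sum_congr rfl hconst, Finset.sum_const, nsmul_eq_mul]
    rw [e1, ← Finset.sum_filter_add_sum_filter_not (S ×ˢ S) (fun p => p.1 = p.2), e2, e3]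
  -- the model coefficient function
  set w : G → ℂ := fun g =>
    (m : ℂ) + (if g ∈ D then ((l : ℂ) - m) else 0) + (if g = 1 then -(m : ℂ) else 0) with hwdef
  have hfilterS : Finset.univ.filter (fun g : G => g ∈ D) = S := by
    ext x; simp [hmemS x]
  have wsum : ∀ χ : G →* ℂˣ,
      ∑ g : G, w g * (χ g : ℂ) = (m : ℂ) * (∑ g : G, (χ g : ℂ)) + ((l : ℂ) - m) * cs χ - m := by
    intro χ
    have p1 : ∑ g : G, (m : ℂ) * χ g = (m : ℂ) * ∑ g : G, (χ g : ℂ) := by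
      rw [Finset.mul_sum]
    have p2 : ∑ g : G, (if g ∈ D then ((l : ℂ) - m) else 0) * χ g = ((l : ℂ) - m) * cs χ := by
      have : ∀ g : G, (if g ∈ D then ((l : ℂ) - m) else 0) * χ g
          = (if g ∈ D then ((l : ℂ) - m) * χ g else 0) := by
        intro g; split <;> simp
      rw [Finset.sum_congr rfl fun g _ => this g, ← Finset.sum_filter, hfilterS,
        hcsdef, Finset.mul_sum]
    have p3 : ∑ g : G, (if g = 1 then -(m : ℂ) else 0) * χ g = -(m : ℂ) := by
      have : ∀ g : G, (if g = 1 then -(m : ℂ) else 0) * χ g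
          = (if g = 1 then -(m : ℂ) * χ g else 0) := by
        intro g; split <;> simp
      rw [Finset.sum_congr rfl fun g _ => this g, Finset.sum_ite_eq' Finset.univ (1 : G)]
      simp
    calc ∑ g : G, w g * (χ g : ℂ)
        = ∑ g : G, ((m : ℂ) * χ g + (if g ∈ D then ((l : ℂ) - m) else 0) * χ g
            + (if g = 1 then -(m : ℂ) else 0) * χ g) := by
          refine Finset.sum_congr rfl fun g _ => ?_
          rw [hwdef]; ring
      _ = (m : ℂ) * (∑ g : G, (χ g : ℂ)) + ((l : ℂ) - m) * cs χ - m := by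
          rw [Finset.sum_add_distrib, Finset.sum_add_distrib, p1, p2, p3]; ring
  constructor
  · -- forward direction
    rintro ⟨⟨hv', hk', hcond⟩, h1', hinv⟩ χ hχ
    have hSinv : ∀ x : G, x ∈ S → x⁻¹ ∈ S := by
      intro x hx
      rw [hmemS] at hx ⊢
      rw [← hinv]
      simpa using hx
    have hTinv : ∑ x ∈ S, (χ x⁻¹ : ℂ) = cs χ := by
      rw [hcsdef]
      exact Finset.sum_nbij' (fun x => x⁻¹) (fun x => x⁻¹) hSinv hSinv
        (fun a _ => inv_inv a) (fun a _ => inv_inv a) (fun a _ => rfl)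
    have hNw : ∀ g : G, (diffCount D g : ℂ) = w g := by
      intro g
      by_cases hg1 : g = 1
      · subst hg1
        have hd0 : diffCount D (1 : G) = 0 := by
          rw [hdc, Finset.card_eq_zero]
          rw [hQdef]
          ext p
          simp only [Finset.mem_filter, Finset.notMem_empty, iff_false, not_and]
          intro _ hne hcon
          exact hne (by rwa [mul_inv_eq_one] at hcon)
        rw [hd0, hwdef]
        simp [h1]
      · by_cases hgD : g ∈ D
        · have := (hcond g hg1).1 hgD
          have hc : (diffCount D g : ℂ) = ((l : ℤ) : ℂ) := by exact_mod_cast congrArg (Int.cast : ℤ → ℂ) this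
          rw [hc, hwdef]
          simp only [hgD, if_pos, hg1, if_neg, ite_false]
          push_cast
          ring
        · have := (hcond g hg1).2 hgD
          have hc : (diffCount D g : ℂ) = ((m : ℤ) : ℂ) := by exact_mod_cast congrArg (Int.cast : ℤ → ℂ) this
          rw [hc, hwdef]
          simp only [hgD, if_neg, hg1, ite_false]
          push_cast
          ring
    have quad : cs χ ^ 2 = ((b : ℂ)) * cs χ + (c : ℂ) := by
      have hk2 := key χ
      rw [hTinv] at hk2
      rw [Finset.sum_congr rfl (fun g _ => by rw [hNw g]), wsum χ,
        aux_sum_char_eq_zero χ hχ] at hk2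
      rw [hbdef, hcdef]
      push_cast
      linear_combination hk2
    have factor : (cs χ - (((b + s) / 2 : ℝ) : ℂ)) * (cs χ - (((b - s) / 2 : ℝ) : ℂ)) = 0 := by
      push_cast
      linear_combination quad - (1 / 4 : ℂ) * hsC
    rw [hcs χ]
    rcases mul_eq_zero.mp factor with hz | hz
    · left
      rw [sub_eq_zero] at hz
      rw [hz]
    · right
      rw [sub_eq_zero] at hz
      rw [hz]
  · -- converse direction
    intro h
    have hreal : ∀ χ : G →* ℂˣ, χ ≠ 1 →
        ∃ r : ℝ, cs χ = (r : ℂ) ∧ ((r : ℂ)) ^ 2 = (b : ℂ) * r + (c : ℂ) := by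
      intro χ hχ
      rcases h χ hχ with hcase | hcase <;> rw [hcs χ] at hcase
      · exact ⟨(b + s) / 2, hcase, by push_cast; linear_combination (1 / 4 : ℂ) * hsC⟩
      · exact ⟨(b - s) / 2, hcase, by push_cast; linear_combination (1 / 4 : ℂ) * hsC⟩
    have hconj : ∀ χ : G →* ℂˣ, ∑ x ∈ S, (χ x⁻¹ : ℂ) = (starRingEnd ℂ) (cs χ) := by
      intro χ
      rw [hcsdef, map_sum]
      refine Finset.sum_congr rfl fun x _ => ?_
      have hx : ((χ x : ℂˣ) : ℂ) ^ Fintype.card G = 1 := by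
        have : (χ x) ^ Fintype.card G = 1 := by
          rw [← map_pow, pow_card_eq_one, map_one]
        have h2 : ((χ x ^ Fintype.card G : ℂˣ) : ℂ) = 1 := by rw [this]; rfl
        simpa using h2
      have hnorm : ‖((χ x : ℂˣ) : ℂ)‖ = 1 :=
        Complex.norm_eq_one_of_pow_eq_one hx Fintype.card_ne_zero
      rw [← Complex.inv_eq_conj hnorm, ← Units.val_inv_eq_inv_val, ← map_inv]
    have hsame : ∀ χ : G →* ℂˣ, (starRingEnd ℂ) (cs χ) = cs χ := by
      intro χ
      by_cases hχ : χ = 1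
      · subst hχ
        rw [hcs1]
        simp
      · obtain ⟨r, hr, _⟩ := hreal χ hχ
        rw [hr, Complex.conj_ofReal]
    -- closure under inverse
    have hfD : (fun g : G => if g⁻¹ ∈ D then (1 : ℂ) else 0)
        = (fun g : G => if g ∈ D then (1 : ℂ) else 0) := by
      refine aux_inversion _ _ fun χ => ?_
      have lhs1 : ∑ g : G, (if g⁻¹ ∈ D then (1 : ℂ) else 0) * χ g
          = ∑ g : G, (if g ∈ D then (1 : ℂ) else 0) * (χ g⁻¹ : ℂ) := by
        refine Fintype.sum_equiv (Equiv.inv G) _ _ fun g => ?_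
        simp
      have lhs2 : ∑ g : G, (if g ∈ D then (1 : ℂ) else 0) * (χ g⁻¹ : ℂ)
          = ∑ x ∈ S, (χ x⁻¹ : ℂ) := by
        have : ∀ g : G, (if g ∈ D then (1 : ℂ) else 0) * (χ g⁻¹ : ℂ)
            = (if g ∈ D then (χ g⁻¹ : ℂ) else 0) := by intro g; split <;> simp
        rw [Finset.sum_congr rfl fun g _ => this g, ← Finset.sum_filter, hfilterS]
      have rhs1 : ∑ g : G, (if g ∈ D then (1 : ℂ) else 0) * χ g = cs χ := by
        have : ∀ g : G, (if g ∈ D then (1 : ℂ) else 0) * (χ g : ℂ)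
            = (if g ∈ D then (χ g : ℂ) else 0) := by intro g; split <;> simp
        rw [Finset.sum_congr rfl fun g _ => this g, ← Finset.sum_filter, hfilterS, hcsdef]
      rw [lhs1, lhs2, rhs1, hconj, hsame]
    have hDinv : D⁻¹ = D := by
      ext x
      have hfx := congrFun hfD x⁻¹
      simp only [inv_inv] at hfx
      constructor
      · intro hx
        rw [Set.mem_inv] at hx
        by_contra hcon
        rw [if_neg hcon, if_pos hx] at hfx
        exact zero_ne_one hfx
      · intro hx
        rw [Set.mem_inv]
        by_contra hcon
        rw [if_pos hx, if_neg hcon] at hfx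
        exact one_ne_zero hfx
    -- counts
    have hNw : (fun g : G => (diffCount D g : ℂ)) = w := by
      refine aux_inversion _ _ fun χ => ?_
      have hkey := key χ
      rw [hconj χ, hsame χ] at hkey
      have lhs : ∑ g : G, (diffCount D g : ℂ) * χ g = cs χ * cs χ - k := by
        linear_combination -hkey
      rw [lhs, wsum χ]
      by_cases hχ : χ = 1
      · subst hχ
        have hsum1 : ∑ g : G, ((1 : G →* ℂˣ) g : ℂ) = (v : ℂ) := by
          simp only [MonoidHom.one_apply, Units.val_one, Finset.sum_const, Finset.card_univ,
            nsmul_eq_mul, mul_one]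
          rw [← hv, Nat.card_eq_fintype_card]
        rw [hsum1, hcs1]
        have heqC : (k : ℂ) ^ 2 = (k : ℂ) - m + ((l : ℂ) - m) * k + (m : ℂ) * v := by
          exact_mod_cast heq
        linear_combination heqC
      · obtain ⟨r, hr, hr2⟩ := hreal χ hχ
        rw [aux_sum_char_eq_zero χ hχ, hr]
        rw [hbdef, hcdef] at hr2
        push_cast at hr2 ⊢
        linear_combination hr2
    refine ⟨⟨hv, hk, fun g hg => ⟨?_, ?_⟩⟩, h1, hDinv⟩
    · intro hgD
      have := congrFun hNw g
      rw [hwdef] at this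
      simp only [hgD, if_pos, hg, ite_false] at this
      have : (diffCount D g : ℂ) = ((l : ℤ) : ℂ) := by rw [this]; push_cast; ring
      exact_mod_cast this
    · intro hgD
      have := congrFun hNw g
      rw [hwdef] at this
      simp only [hgD, hg, ite_false] at this
      have : (diffCount D g : ℂ) = ((m : ℤ) : ℂ) := by rw [this]; push_cast; ring
      exact_mod_cast this
end

section
/- Let G be an abelian group of order t², let U₀ be a subgroup of order t, and let U₁,…,U_t be t-subsets of G. Then {U₀, U₁,…,U_t} is a (t,t+1) partial congruence partition in G if and only if {U₁∖{1_G},…,U_t∖{1_G}} is a (1,t) LP-packing in G relative to U₀. -/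
open Finset BigOperators

variable {G : Type*}

/-- An `(n,r)` partial congruence partition, given as a family of subsets each of which
is required to be (the carrier of) a subgroup of order `n`, pairwise intersecting trivially. -/
def IsPCP [Group G] (n r : ℕ) (Us : Fin r → Set G) : Prop :=
  Nat.card G = n ^ 2 ∧ (∀ i, ∃ Hs : Subgroup G, (Hs : Set G) = Us i) ∧
    (∀ i, Nat.card (Us i) = n) ∧ ∀ i j, i ≠ j → Us i ∩ Us j = {1}

/-- `diffCount` as the cardinality of a set of "second coordinates". -/
lemma diffCount_eq_ncard [Group G] (D : Set G) (g : G) :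
    diffCount D g = {y | y ∈ D ∧ g * y ∈ D ∧ g * y ≠ y}.ncard := by
  have h1 : diffCount D g =
      ({p : G × G | p.1 ∈ D ∧ p.2 ∈ D ∧ p.1 ≠ p.2 ∧ p.1 * p.2⁻¹ = g}).ncard := by
    rw [← Nat.card_coe_set_eq]; rfl
  have h2 : {p : G × G | p.1 ∈ D ∧ p.2 ∈ D ∧ p.1 ≠ p.2 ∧ p.1 * p.2⁻¹ = g}
      = (fun y => (g * y, y)) '' {y | y ∈ D ∧ g * y ∈ D ∧ g * y ≠ y} := by
    ext p
    simp only [Set.mem_setOf_eq, Set.mem_image]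
    constructor
    · rintro ⟨ha, hb, hc, hd⟩
      have hp1 : p.1 = g * p.2 := by
        rwa [mul_inv_eq_iff_eq_mul] at hd
      refine ⟨p.2, ⟨hb, ?_, ?_⟩, ?_⟩
      · rw [← hp1]; exact ha
      · rw [← hp1]; exact hc
      · exact Prod.ext hp1.symm rfl
    · rintro ⟨y, ⟨hy, hgy, hne⟩, rfl⟩
      exact ⟨hgy, hy, hne, by group⟩
  rw [h1, h2, Set.ncard_image_of_injective _ (fun a b h => by
    simpa using congrArg Prod.snd h)]

lemma ncard_iUnion_fin {α : Type*} {n : ℕ} (A : Fin n → Set α)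
    (hfin : ∀ i, (A i).Finite) (hdisj : ∀ i j, i ≠ j → Disjoint (A i) (A j)) :
    (⋃ i, A i).ncard = ∑ i, (A i).ncard := by
  classical
  have h : (⋃ i, A i) = ↑(Finset.univ.biUnion fun i => (hfin i).toFinset) := by
    ext x; simp [Set.Finite.mem_toFinset]
  rw [h, Set.ncard_coe_finset, Finset.card_biUnion
    (fun i _ j _ hij => Set.Finite.disjoint_toFinset.mpr (hdisj i j hij))]
  exact Finset.sum_congr rfl fun i _ => (Set.ncard_eq_toFinset_card _ (hfin i)).symm

/-- A subgroup of order `t` with the identity removed is a Latin square type PDS. -/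
lemma latin_of_subgroup [CommGroup G] [Finite G] {t : ℕ} (ht : 2 ≤ t)
    (hG : Nat.card G = t ^ 2) (H : Subgroup G) (hH : Nat.card H = t) :
    IsLatinPDS ((H : Set G) \ {1}) t 1 := by
  have hHn : ((H : Set G)).ncard = t := by
    rw [← Nat.card_coe_set_eq]; exact hH
  have h1H : (1 : G) ∈ (H : Set G) := H.one_mem
  have hDcard : ((H : Set G) \ {1}).ncard = t - 1 := by
    rw [Set.ncard_diff_singleton_of_mem h1H, hHn]
  refine ⟨⟨hG, ?_, ?_⟩, ?_, ?_⟩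
  · rw [Nat.card_coe_set_eq, hDcard, one_mul]
  · intro g hg
    constructor
    · rintro ⟨hgH, -⟩
      have hginv : g⁻¹ ≠ 1 := inv_ne_one.mpr hg
      rw [diffCount_eq_ncard]
      have hset : {y | y ∈ (H : Set G) \ {1} ∧ g * y ∈ (H : Set G) \ {1} ∧ g * y ≠ y}
          = (H : Set G) \ {1, g⁻¹} := by
        ext y
        simp only [Set.mem_setOf_eq, Set.mem_diff, Set.mem_singleton_iff,
          Set.mem_insert_iff, SetLike.mem_coe]
        constructor
        · rintro ⟨⟨hy, hy1⟩, ⟨hgy, hgy1⟩, -⟩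
          refine ⟨hy, ?_⟩
          push_neg
          refine ⟨hy1, fun h => hgy1 ?_⟩
          rw [h, mul_inv_cancel]
        · rintro ⟨hy, hy2⟩
          push_neg at hy2
          refine ⟨⟨hy, hy2.1⟩, ⟨H.mul_mem hgH hy, fun h => hy2.2 ?_⟩, fun h => hg (mul_right_cancel (b := y) (a := g) (c := 1) (by rw [one_mul]; exact h))⟩
          rw [eq_inv_iff_mul_eq_one, mul_comm]; exact h
      rw [hset, Set.ncard_diff (by
          rintro x (rfl | hx)
          · exact h1H
          · simp only [Set.mem_singleton_iff] at hx
            rw [hx]; exact H.inv_mem hgH),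
        Set.ncard_pair (Ne.symm hginv), hHn]
      push_cast [Nat.cast_sub ht]
      ring
    · intro hgD
      rw [diffCount_eq_ncard]
      have hset : {y | y ∈ (H : Set G) \ {1} ∧ g * y ∈ (H : Set G) \ {1} ∧ g * y ≠ y}
          = (∅ : Set G) := by
        ext y
        simp only [Set.mem_setOf_eq, Set.mem_empty_iff_false, iff_false, not_and]
        rintro ⟨hy, -⟩ ⟨hgy, -⟩
        intro _
        exact hgD ⟨by
          have : g * y * y⁻¹ ∈ H := H.mul_mem hgy (H.inv_mem hy)
          simpa using this, hg⟩
      rw [hset, Set.ncard_empty]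
      norm_num
  · simp
  · ext x
    simp only [Set.mem_inv, Set.mem_diff, Set.mem_singleton_iff, SetLike.mem_coe,
      inv_mem_iff, inv_ne_one]

/-- From a `(t², t-1, t-2, 0)` Latin square type PDS one recovers a subgroup. -/
lemma subgroup_of_latin [CommGroup G] [Finite G] {t : ℕ} (ht : 2 ≤ t) (U : Set G)
    (hU : Nat.card U = t) (h : IsLatinPDS (U \ {1}) t 1) :
    (1 : G) ∈ U ∧ ∃ H : Subgroup G, (H : Set G) = U := by
  obtain ⟨⟨hv, hk, hlm⟩, h1, hinv⟩ := h
  have hUn : U.ncard = t := by rw [← Nat.card_coe_set_eq]; exact hU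
  have hDn : (U \ {1}).ncard = 1 * (t - 1) := by
    rw [← Nat.card_coe_set_eq]; exact hk
  rw [one_mul] at hDn
  have h1U : (1 : G) ∈ U := by
    by_contra hc
    rw [Set.diff_singleton_eq_self hc, hUn] at hDn
    omega
  refine ⟨h1U, ?_⟩
  have hclosed : ∀ x ∈ U, ∀ y ∈ U, x * y⁻¹ ∈ U := by
    have hinvmem : ∀ y ∈ U, y⁻¹ ∈ U := by
      intro y hy
      rcases eq_or_ne y 1 with rfl | hy1
      · simpa using h1U
      · have hyD : y ∈ U \ {1} := ⟨hy, hy1⟩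
        have : y⁻¹ ∈ (U \ {1})⁻¹ := by
          rw [Set.mem_inv, inv_inv]; exact hyD
        rw [hinv] at this
        exact this.1
    intro x hx y hy
    rcases eq_or_ne x y with rfl | hxy
    · simpa using h1U
    rcases eq_or_ne x 1 with rfl | hx1
    · simpa using hinvmem y hy
    rcases eq_or_ne y 1 with rfl | hy1
    · simpa using hx
    have hg1 : x * y⁻¹ ≠ 1 := by
      intro hcon
      exact hxy (by rwa [mul_inv_eq_one] at hcon)
    by_contra hgU
    have hgD : x * y⁻¹ ∉ U \ {1} := fun hc => hgU hc.1
    have hzero : (diffCount (U \ {1}) (x * y⁻¹) : ℤ) = (1 : ℤ) ^ 2 - 1 :=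
      (hlm _ hg1).2 hgD
    norm_num at hzero
    have hpos : 0 < diffCount (U \ {1}) (x * y⁻¹) := by
      rw [diffCount]
      have : Nonempty {p : G × G // p.1 ∈ U \ {1} ∧ p.2 ∈ U \ {1} ∧ p.1 ≠ p.2 ∧
          p.1 * p.2⁻¹ = x * y⁻¹} := ⟨⟨(x, y), ⟨hx, hx1⟩, ⟨hy, hy1⟩, hxy, rfl⟩⟩
      exact Nat.card_pos
    omega
  exact ⟨Subgroup.ofDiv U ⟨1, h1U⟩ hclosed, rfl⟩

theorem stmt_4 {G : Type*} [CommGroup G] [Finite G] (t : ℕ) (ht : 1 < t)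
    (hG : Nat.card G = t ^ 2) (U0 : Subgroup G) (hU0 : Nat.card U0 = t)
    (Uf : Fin t → Set G) (hUf : ∀ i, Nat.card (Uf i) = t) :
    IsPCP t (t + 1) (Fin.cons (U0 : Set G) Uf) ↔
      IsLPPacking 1 t (fun i => Uf i \ {1}) U0 := by
  have ht2 : 2 ≤ t := ht
  constructor
  · rintro ⟨hcard, hsub, hcards, hint⟩
    -- basic facts
    have hsubU : ∀ i, ∃ H : Subgroup G, (H : Set G) = Uf i := by
      intro i
      obtain ⟨H, hH⟩ := hsub i.succ
      rw [Fin.cons_succ] at hH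
      exact ⟨H, hH⟩
    have h1mem : ∀ i, (1 : G) ∈ Uf i := by
      intro i
      obtain ⟨H, hH⟩ := hsubU i
      rw [← hH]; exact H.one_mem
    have hintU0 : ∀ i, (U0 : Set G) ∩ Uf i = {1} := by
      intro i
      have := hint 0 i.succ (by simp [Fin.ext_iff])
      rwa [Fin.cons_zero, Fin.cons_succ] at this
    have hintij : ∀ i j : Fin t, i ≠ j → Uf i ∩ Uf j = {1} := by
      intro i j hij
      have := hint i.succ j.succ (by simpa [Fin.ext_iff] using hij)
      rwa [Fin.cons_succ, Fin.cons_succ] at this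
    have hdisjA : ∀ i j : Fin t, i ≠ j → Disjoint (Uf i \ {1}) (Uf j \ {1}) := by
      intro i j hij
      rw [Set.disjoint_left]
      rintro x ⟨hxi, hx1⟩ ⟨hxj, -⟩
      apply hx1
      have : x ∈ Uf i ∩ Uf j := ⟨hxi, hxj⟩
      rwa [hintij i j hij] at this
    have hAcard : ∀ i : Fin t, (Uf i \ {1}).ncard = t - 1 := by
      intro i
      rw [Set.ncard_diff_singleton_of_mem (h1mem i), ← Nat.card_coe_set_eq, hUf i]
    -- the union count
    have hUcard : (⋃ i, Uf i \ {1}).ncard = t * (t - 1) := by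
      rw [ncard_iUnion_fin _ (fun i => Set.toFinite _) hdisjA]
      simp [hAcard, Finset.sum_const, Finset.card_univ]
    have hdisjU0 : Disjoint (U0 : Set G) (⋃ i, Uf i \ {1}) := by
      rw [Set.disjoint_iUnion_right]
      intro i
      rw [Set.disjoint_left]
      rintro x hx ⟨hxi, hx1⟩
      apply hx1
      have : x ∈ (U0 : Set G) ∩ Uf i := ⟨hx, hxi⟩
      rwa [hintU0 i] at this
    have hSuniv : (U0 : Set G) ∪ (⋃ i, Uf i \ {1}) = Set.univ := by
      refine Set.eq_of_subset_of_ncard_le (Set.subset_univ _) ?_ Set.finite_univ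
      rw [Set.ncard_univ, hG, Set.ncard_union_eq hdisjU0, hUcard,
        ← Nat.card_coe_set_eq]
      have : Nat.card (U0 : Set G) = t := hU0
      rw [this]
      obtain ⟨s, rfl⟩ : ∃ s, t = s + 1 := ⟨t - 1, by omega⟩
      simp only [Nat.add_sub_cancel]
      ring_nf
      omega
    have hUnion : (⋃ i, Uf i \ {1}) = Set.univ \ (U0 : Set G) := by
      apply subset_antisymm
      · intro x hx
        refine ⟨trivial, fun hxU0 => ?_⟩
        exact (Set.disjoint_right.mp hdisjU0 hx) hxU0
      · rintro x ⟨-, hxU0⟩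
        have : x ∈ (U0 : Set G) ∪ (⋃ i, Uf i \ {1}) := hSuniv ▸ Set.mem_univ x
        rcases this with h | h
        · exact absurd h hxU0
        · exact h
    refine ⟨by rw [hG]; ring, by rw [hU0]; ring, ?_, ?_, ?_⟩
    · intro i
      obtain ⟨H, hH⟩ := hsubU i
      have hHt : Nat.card H = t := by
        have : Nat.card (Uf i) = t := hUf i
        rw [← hH] at this
        exact this
      have := latin_of_subgroup ht2 hG H hHt
      rw [hH] at this
      simpa [mul_one] using this
    · exact hdisjA
    · exact hUnion
  · rintro ⟨hc1, hc2, hlat, hdisj, hunion⟩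
    have key : ∀ i, (1 : G) ∈ Uf i ∧ ∃ H : Subgroup G, (H : Set G) = Uf i :=
      fun i => subgroup_of_latin ht2 (Uf i) (hUf i) (by simpa [mul_one] using hlat i)
    have hsub0 : ∀ i, Uf i ∩ (U0 : Set G) ⊆ {1} := by
      intro i x ⟨hxi, hxU0⟩
      by_contra hx1
      have hxD : x ∈ Uf i \ {1} := ⟨hxi, hx1⟩
      have : x ∈ ⋃ j, Uf j \ {1} := Set.mem_iUnion.mpr ⟨i, hxD⟩
      rw [hunion] at this
      exact this.2 hxU0
    have hsubij : ∀ i j : Fin t, i ≠ j → Uf i ∩ Uf j ⊆ {1} := by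
      intro i j hij x ⟨hxi, hxj⟩
      by_contra hx1
      exact Set.disjoint_left.mp (hdisj i j hij) ⟨hxi, hx1⟩ ⟨hxj, hx1⟩
    refine ⟨hG, ?_, ?_, ?_⟩
    · intro i
      induction i using Fin.cases with
      | zero => exact ⟨U0, by rw [Fin.cons_zero]⟩
      | succ j =>
        obtain ⟨H, hH⟩ := (key j).2
        exact ⟨H, by rw [Fin.cons_succ]; exact hH⟩
    · intro i
      induction i using Fin.cases with
      | zero => rw [Fin.cons_zero]; exact hU0
      | succ j => rw [Fin.cons_succ]; exact hUf j
    · intro i j hij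
      induction i using Fin.cases with
      | zero =>
        induction j using Fin.cases with
        | zero => exact absurd rfl hij
        | succ k =>
          rw [Fin.cons_zero, Fin.cons_succ]
          apply subset_antisymm
          · intro x ⟨hx0, hxk⟩
            exact hsub0 k ⟨hxk, hx0⟩
          · rintro x rfl
            exact ⟨U0.one_mem, (key k).1⟩
      | succ k =>
        induction j using Fin.cases with
        | zero =>
          rw [Fin.cons_zero, Fin.cons_succ]
          apply subset_antisymm
          · intro x ⟨hxk, hx0⟩
            exact hsub0 k ⟨hxk, hx0⟩
          · rintro x rfl
            exact ⟨(key k).1, U0.one_mem⟩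
        | succ l =>
          rw [Fin.cons_succ, Fin.cons_succ]
          apply subset_antisymm
          · exact hsubij k l (by simpa [Fin.ext_iff] using hij)
          · rintro x rfl
            exact ⟨(key k).1, (key l).1⟩
end

section
/- For a prime p and positive integer s, let V be a 2s-dimensional vector space over F_p and {H₀, H₁, …, H_{p^s}} a spread of V (a family of p^s+1 s-dimensional subspaces pairwise intersecting only in 0). Then {H₁∖{0}, …, H_{p^s}∖{0}} is a (1, p^s) LP-packing in the additive group V relative to H₀, and every nontrivial character of V is principal on exactly one of H₀,…,H_{p^s}. -/
open Finset BigOperators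

variable {G : Type*}

/-!
The punctured members of a spread partition the nonidentity elements of a group of order `q²`,
since `(q + 1)(q - 1) = q² - 1`. A punctured subgroup `U \ {1}` of order `q = √|G|` is a Latin
square type PDS with `r = 1`: the equation `x y⁻¹ = g` has `|U| - 2` solutions in `U \ {1}` when
`1 ≠ g ∈ U`, and none when `g ∉ U`.

A nontrivial character of an elementary abelian `p`-group takes values in the `p`-th roots of
unity, so its kernel `K` is proper of index at most `p`. Two members of the spread already give
`q²` distinct products, so at most one lies in `K`; if none did, every `U ⊓ K` would have order at
most `q / p`, too few to cover the at least `q² / p - 1` nonidentity elements of `K`.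
-/

namespace Subgroup

variable [Group G]

lemma disjoint_diff_one_of_inf_eq_bot {U W : Subgroup G} (h : U ⊓ W = ⊥) :
    Disjoint ((U : Set G) \ {1}) ((W : Set G) \ {1}) := by
  rw [Set.disjoint_left]
  rintro g ⟨hgU, hg1⟩ ⟨hgW, -⟩
  exact hg1 (by simpa [h] using mem_inf.mpr ⟨hgU, hgW⟩)

lemma ncard_diff_one_add_one (U : Subgroup G) [Finite U] :
    ((U : Set G) \ {1}).ncard + 1 = Nat.card U := by
  rw [← Set.ncard_singleton (1 : G), Set.ncard_sdiff_add_ncard_of_subset (by simp),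
    ← Nat.card_coe_set_eq]
  rfl

lemma card_mul_card_le_of_inf_eq_bot {A B K : Subgroup G} [Finite K] (hAB : A ⊓ B = ⊥)
    (hA : A ≤ K) (hB : B ≤ K) : Nat.card A * Nat.card B ≤ Nat.card K := by
  rw [← Nat.card_prod]
  refine Nat.card_le_card_of_injective
    (fun ab => ⟨ab.1 * ab.2, K.mul_mem (hA ab.1.2) (hB ab.2.2)⟩) ?_
  rintro ⟨a, b⟩ ⟨a', b'⟩ h
  have h : a.1 * b = a' * b' := congrArg Subtype.val h
  have hab : a'.1⁻¹ * a = b' * b.1⁻¹ := by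
    rw [inv_mul_eq_iff_eq_mul, ← mul_assoc, eq_mul_inv_iff_mul_eq, h]
  have ha : a'.1⁻¹ * a ∈ A ⊓ B :=
    ⟨A.mul_mem (A.inv_mem a'.2) a.2, hab ▸ B.mul_mem b'.2 (B.inv_mem b.2)⟩
  rw [hAB, mem_bot, inv_mul_eq_one] at ha
  obtain rfl : a' = a := Subtype.ext ha
  obtain rfl : b = b' := Subtype.ext (mul_left_cancel h)
  rfl

lemma card_inf_mul_le_of_not_le {p s : ℕ} (hp : p.Prime) {U K : Subgroup G} [Finite U]
    (hU : Nat.card U = p ^ s) (h : ¬U ≤ K) : Nat.card (U ⊓ K : Subgroup G) * p ≤ p ^ s := by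
  obtain ⟨m, hm, hcard⟩ := (Nat.dvd_prime_pow hp).1 (hU ▸ card_dvd_of_le inf_le_left)
  have hms : m < s := by
    refine lt_of_le_of_ne hm fun hms => h (inf_eq_left.mp ?_)
    exact eq_of_le_of_card_ge inf_le_left (by rw [hU, hcard, hms])
  rw [hcard, ← pow_succ]
  exact Nat.pow_le_pow_right hp.pos hms

end Subgroup

section LatinSquare

variable [Group G]

lemma diffCount_diff_one_of_notMem {U : Subgroup G} {g : G} (hg : g ∉ U) :
    diffCount ((U : Set G) \ {1}) g = 0 := by
  rw [diffCount, Nat.card_eq_zero]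
  left
  refine ⟨fun ⟨⟨x, y⟩, hx, hy, _, hxy⟩ => hg ?_⟩
  exact hxy ▸ U.mul_mem hx.1 (U.inv_mem hy.1)

lemma diffCount_diff_one_add_two {U : Subgroup G} [Finite U] {g : G} (hg : g ∈ U)
    (hg1 : g ≠ 1) :
    diffCount ((U : Set G) \ {1}) g + 2 = Nat.card U := by
  have hpair : ({1, g} : Set G) ⊆ U := Set.insert_subset U.one_mem (by simpa using hg)
  have hU : Nat.card U = (U : Set G).ncard := Nat.card_coe_set_eq (U : Set G)
  rw [hU, ← Set.ncard_sdiff_add_ncard_of_subset hpair, Set.ncard_pair hg1.symm, diffCount,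
    ← Nat.card_coe_set_eq]
  congr 1
  refine Nat.card_congr
    { toFun := fun xy => ⟨xy.1.1, ?_⟩
      invFun := fun x => ⟨(x, g⁻¹ * x), ?_⟩
      left_inv := fun ⟨⟨x, y⟩, _, _, _, hxy⟩ => ?_
      right_inv := fun _ => rfl }
  · obtain ⟨⟨x, y⟩, ⟨hxU, hx1⟩, ⟨-, hy1⟩, -, rfl⟩ := xy
    simp only [Set.mem_singleton_iff] at hx1 hy1
    simp [hxU, hx1, hy1]
  · obtain ⟨x, hxU, hx⟩ := x
    simp only [Set.mem_insert_iff, Set.mem_singleton_iff, not_or] at hx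
    simp_all [U.mul_mem (U.inv_mem hg) hxU, inv_mul_eq_one, eq_comm (a := x)]
  · subst hxy
    simp

lemma isLatinPDS_diff_one [Finite G] (U : Subgroup G) (hG : Nat.card G = Nat.card U ^ 2) :
    IsLatinPDS ((U : Set G) \ {1}) (Nat.card U) 1 := by
  refine ⟨⟨hG, ?_, fun g hg1 => ⟨fun hg => ?_, fun hg => ?_⟩⟩, by simp, ?_⟩
  · have := U.ncard_diff_one_add_one
    rw [Nat.card_coe_set_eq]
    omega
  · have := diffCount_diff_one_add_two hg.1 hg1
    push_cast
    omega
  · rw [diffCount_diff_one_of_notMem fun hgU => hg ⟨hgU, hg1⟩]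
    simp
  · ext g
    simp

end LatinSquare

/-- The group-theoretic content of a spread of `𝔽_p^{2s}`, with `q = p ^ s`. -/
structure IsSpread [Group G] {ι : Type*} (U : ι → Subgroup G) (q : ℕ) : Prop where
  card_eq : Nat.card G = q ^ 2
  card_index : Nat.card ι = q + 1
  card_subgroup : ∀ i, Nat.card (U i) = q
  inf_eq_bot : Pairwise fun i j => U i ⊓ U j = ⊥

namespace IsSpread

variable [Group G] {ι : Type*} {U : ι → Subgroup G} {q p s : ℕ}

lemma finite_index (hU : IsSpread U q) : Finite ι :=
  Nat.finite_of_card_ne_zero (by simp [hU.card_index])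

variable [Finite G]

lemma iUnion_diff_one (hU : IsSpread U q) : ⋃ i, ((U i : Set G) \ {1}) = {1}ᶜ := by
  have := hU.finite_index
  have := Fintype.ofFinite ι
  refine Set.eq_of_subset_of_ncard_le (Set.iUnion_subset fun i => Set.sdiff_subset_compl _ _) ?_
  rw [Set.ncard_iUnion_of_finite (fun _ => Set.toFinite _)
      fun i j hij => Subgroup.disjoint_diff_one_of_inf_eq_bot (hU.inf_eq_bot hij),
    finsum_eq_sum_of_fintype, Set.ncard_compl, Set.ncard_singleton, hU.card_eq]
  have h := fun i => Subgroup.ncard_diff_one_add_one (U i)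
  simp only [hU.card_subgroup] at h
  simp only [fun i => Nat.eq_sub_of_add_eq (h i), Finset.sum_const, Finset.card_univ,
    ← Nat.card_eq_fintype_card, hU.card_index, smul_eq_mul]
  simpa using (Nat.sq_sub_sq q 1).le

lemma exists_mem (hU : IsSpread U q) {g : G} (hg : g ≠ 1) : ∃ i, g ∈ U i := by
  have hg : g ∈ ⋃ i, ((U i : Set G) \ {1}) := hU.iUnion_diff_one ▸ hg
  obtain ⟨i, hi, -⟩ := Set.mem_iUnion.1 hg
  exact ⟨i, hi⟩

lemma eq_of_le_of_le (hU : IsSpread U q) {K : Subgroup G} (hK : K ≠ ⊤) {i j : ι}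
    (hi : U i ≤ K) (hj : U j ≤ K) : i = j := by
  by_contra hij
  have hle := Subgroup.card_mul_card_le_of_inf_eq_bot (hU.inf_eq_bot hij) hi hj
  have hindex := K.card_mul_index
  have htwo := Subgroup.one_lt_index_of_ne_top hK
  have hpos : 0 < Nat.card G := Nat.card_pos
  rw [hU.card_subgroup, hU.card_subgroup] at hle
  rw [hU.card_eq] at hindex hpos
  nlinarith

lemma exists_le (hU : IsSpread U (p ^ s)) (hp : p.Prime) {K : Subgroup G} (hK : K.index ≤ p) :
    ∃ i, U i ≤ K := by
  by_contra! hnot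
  have := hU.finite_index
  have := Fintype.ofFinite ι
  have hcover : (K : Set G) \ {1} ⊆ ⋃ i, ((U i ⊓ K : Subgroup G) : Set G) \ {1} := by
    rintro g ⟨hgK, hg1⟩
    obtain ⟨i, hgU⟩ := hU.exists_mem hg1
    exact Set.mem_iUnion.2 ⟨i, ⟨hgU, hgK⟩, hg1⟩
  have hcount := (Set.ncard_le_ncard hcover).trans (Set.ncard_iUnion_le_of_fintype _)
  have hbound : ∀ i, (((U i ⊓ K : Subgroup G) : Set G) \ {1}).ncard * p + p ≤ p ^ s := by
    intro i
    have := Subgroup.card_inf_mul_le_of_not_le hp (hU.card_subgroup i) (hnot i)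
    rw [← Subgroup.ncard_diff_one_add_one] at this
    linarith
  have hsum := Finset.sum_le_sum fun i (_ : i ∈ Finset.univ) => hbound i
  rw [Finset.sum_add_distrib, ← Finset.sum_mul, Finset.sum_const, Finset.sum_const,
    Finset.card_univ, ← Nat.card_eq_fintype_card, hU.card_index, smul_eq_mul,
    smul_eq_mul] at hsum
  have hK1 := K.ncard_diff_one_add_one
  have hindex := K.card_mul_index
  rw [hU.card_eq] at hindex
  have hq : 0 < p ^ s := pow_pos hp.pos s
  have hp2 := hp.two_le
  nlinarith

end IsSpread

lemma IsSpread.isLPPacking [CommGroup G] [Finite G] {q : ℕ} {U : Fin (q + 1) → Subgroup G}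
    (hU : IsSpread U q) : IsLPPacking 1 q (fun i => (U i.succ : Set G) \ {1}) (U 0) := by
  refine ⟨by rw [hU.card_eq]; ring, by rw [hU.card_subgroup, mul_one], fun i => ?_,
    fun i j hij => ?_, ?_⟩
  · simpa only [mul_one, hU.card_subgroup] using
      isLatinPDS_diff_one (U i.succ) (by rw [hU.card_eq, hU.card_subgroup])
  · exact Subgroup.disjoint_diff_one_of_inf_eq_bot (hU.inf_eq_bot ((Fin.succ_injective _).ne hij))
  · ext g
    simp only [Set.mem_iUnion, Set.mem_sdiff, Set.mem_univ, true_and, SetLike.mem_coe,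
      Set.mem_singleton_iff]
    constructor
    · rintro ⟨i, hgU, hg1⟩ hg0
      have hg : g ∈ U i.succ ⊓ U 0 := ⟨hgU, hg0⟩
      exact hg1 (by simpa [hU.inf_eq_bot (Fin.succ_ne_zero i)] using hg)
    · intro hg0
      have hg1 : g ≠ 1 := fun h => hg0 (h ▸ (U 0).one_mem)
      obtain ⟨i, hgU⟩ := hU.exists_mem hg1
      cases i using Fin.cases with
      | zero => exact absurd hgU hg0
      | succ j => exact ⟨j, hgU, hg1⟩

lemma isPrincipalOn_iff_le_ker [Group G] (χ : G →* ℂˣ) (U : Subgroup G) :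
    IsPrincipalOn χ U ↔ U ≤ χ.ker :=
  Iff.rfl

lemma MonoidHom.index_ker_le_of_forall_pow_eq_one [Group G] {R : Type*} [CommRing R] [IsDomain R]
    {n : ℕ} [NeZero n] (χ : G →* Rˣ) (hG : ∀ g : G, g ^ n = 1) : χ.ker.index ≤ n := by
  rw [Subgroup.index_ker]
  have hrange : χ.range ≤ rootsOfUnity n R := by
    rintro _ ⟨g, rfl⟩
    rw [mem_rootsOfUnity, ← map_pow, hG, map_one]
  exact (Subgroup.card_le_of_le hrange).trans (card_rootsOfUnity R n)

lemma isSpread_toSubgroup {F V ι : Type*} [Field F] [Finite F] [AddCommGroup V] [Module F V]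
    [Finite V] {s : ℕ} (hV : Module.finrank F V = 2 * s) {H : ι → Submodule F V}
    (hι : Nat.card ι = Nat.card F ^ s + 1) (hH : ∀ i, Module.finrank F (H i) = s)
    (hspread : Pairwise fun i j => H i ⊓ H j = ⊥) :
    IsSpread (fun i => (H i).toAddSubgroup.toSubgroup) (Nat.card F ^ s) where
  card_eq := by
    rw [Nat.card_congr Multiplicative.toAdd, Module.natCard_eq_pow_finrank (K := F), hV, pow_mul']
  card_index := hι
  card_subgroup i := by
    rw [← hH i, ← Module.natCard_eq_pow_finrank]
    exact Nat.card_congr (Equiv.subtypeEquiv Multiplicative.toAdd fun _ => Iff.rfl)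
  inf_eq_bot i j hij := by
    change (H i ⊓ H j).toAddSubgroup.toSubgroup = ⊥
    rw [hspread hij, Submodule.bot_toAddSubgroup, map_bot]

theorem stmt_5_general (p s : ℕ) (hp : p.Prime)
    (V : Type*) [AddCommGroup V] [Module (ZMod p) V] [Finite V]
    (hdim : Module.finrank (ZMod p) V = 2 * s)
    (H : Fin (p ^ s + 1) → Submodule (ZMod p) V)
    (hdims : ∀ i, Module.finrank (ZMod p) (H i) = s)
    (hspread : ∀ i j, i ≠ j → H i ⊓ H j = ⊥) :
    IsLPPacking 1 (p ^ s)
      (fun i : Fin (p ^ s) =>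
        ⇑Multiplicative.ofAdd '' ((H i.succ : Set V) \ {0}))
      (AddSubgroup.toSubgroup (H 0).toAddSubgroup) ∧
    ∀ χ : Multiplicative V →* ℂˣ, χ ≠ 1 →
      ∃! i : Fin (p ^ s + 1),
        IsPrincipalOn χ (AddSubgroup.toSubgroup (H i).toAddSubgroup) := by
  have : Fact p.Prime := ⟨hp⟩
  have hU : IsSpread (fun i => (H i).toAddSubgroup.toSubgroup) (p ^ s) := by
    simpa using isSpread_toSubgroup hdim (by simp) hdims hspread
  have himage (i) : ⇑Multiplicative.ofAdd '' ((H i : Set V) \ {0}) =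
      ((H i).toAddSubgroup.toSubgroup : Set (Multiplicative V)) \ {1} := by
    ext g
    simp
  refine ⟨by simpa only [himage] using hU.isLPPacking, fun χ hχ => ?_⟩
  simp only [isPrincipalOn_iff_le_ker]
  have hexp (g : Multiplicative V) : g ^ p = 1 := ZModModule.char_nsmul_eq_zero p g.toAdd
  obtain ⟨i, hi⟩ := hU.exists_le hp (χ.index_ker_le_of_forall_pow_eq_one hexp)
  exact ⟨i, hi, fun j hj => hU.eq_of_le_of_le (MonoidHom.ker_eq_top_iff.not.2 hχ) hj hi⟩

theorem stmt_5 (p s : ℕ) (hp : p.Prime) (hs : 0 < s)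
    (V : Type*) [AddCommGroup V] [Module (ZMod p) V] [Finite V]
    (hdim : Module.finrank (ZMod p) V = 2 * s)
    (H : Fin (p ^ s + 1) → Submodule (ZMod p) V)
    (hdims : ∀ i, Module.finrank (ZMod p) (H i) = s)
    (hspread : ∀ i j, i ≠ j → H i ⊓ H j = ⊥) :
    IsLPPacking 1 (p ^ s)
      (fun i : Fin (p ^ s) =>
        ⇑Multiplicative.ofAdd '' ((H i.succ : Set V) \ {0}))
      (AddSubgroup.toSubgroup (H 0).toAddSubgroup) ∧
    ∀ χ : Multiplicative V →* ℂˣ, χ ≠ 1 →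
      ∃! i : Fin (p ^ s + 1),
        IsPrincipalOn χ (AddSubgroup.toSubgroup (H i).toAddSubgroup) :=
  stmt_5_general p s hp V hdim H hdims hspread
end

section
/- Suppose {P₁,…,P_t} is a (c,t) LP-packing in an abelian group G of order t²c² relative to a subgroup U of order tc, and let I be a b-element subset of {1,…,t}. Then (i) the union ∪_{i∈I} Pᵢ is a regular (tc, bc) Latin square type PDS in G, and (ii) (∪_{i∈I} Pᵢ) ∪ (U∖{1_G}) is a regular (tc, bc+1) Latin square type PDS in G. -/
open Finset BigOperators

variable {G : Type*}

/-
A set `D` with `1 ∉ D = D⁻¹` and `|D| = r(n-1)` in an abelian group of order `n²` is a regular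
`(n, r)` Latin square type PDS iff `χ(D) ∈ {-r, n-r}` for every nonprincipal character `χ`: both
conditions say that `g ↦ #{(x, y) ∈ D² | x y⁻¹ = g}` has a prescribed Fourier transform.

For a packing the numbers `χ(Pᵢ) + c` lie in `{0, tc}` and add up to `tc - χ(U) ∈ {0, tc}`, so at
most one of them is nonzero and every partial sum lies in `{0, tc}` again; this gives (i).
For (ii), `(⋃_{i ∈ I} Pᵢ) ∪ (U ∖ {1})` is the complement of `{1} ∪ ⋃_{i ∉ I} Pᵢ`, and complementing
`{1} ∪ D` turns a regular `(n, r)` Latin square type PDS `D` into a regular `(n, n + 1 - r)` one.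
-/

namespace MonoidHom

variable [CommGroup G] [Fintype G]

noncomputable instance : Fintype (G →* ℂˣ) := Fintype.ofFinite _

theorem sum_apply_units_eq_zero {χ : G →* ℂˣ} (hχ : χ ≠ 1) : ∑ g, (χ g : ℂ) = 0 :=
  sum_hom_units_eq_zero ((Units.coeHom ℂ).comp χ) fun h ↦
    hχ <| MonoidHom.ext fun g ↦ Units.ext <| DFunLike.congr_fun h g

theorem sum_dual_apply_eq_ite [DecidableEq G] (g : G) :
    ∑ χ : G →* ℂˣ, (χ g : ℂ) = if g = 1 then (Fintype.card G : ℂ) else 0 := by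
  split_ifs with hg
  · simp [hg, ← Nat.card_eq_fintype_card,
      CommGroup.card_monoidHom_of_hasEnoughRootsOfUnity]
  · obtain ⟨χ, hχ⟩ := CommGroup.exists_apply_ne_one_of_hasEnoughRootsOfUnity G ℂ hg
    let eval : (G →* ℂˣ) →* ℂˣ := ⟨⟨fun χ ↦ χ g, rfl⟩, fun _ _ ↦ rfl⟩
    exact sum_apply_units_eq_zero (χ := eval) fun h ↦ hχ (DFunLike.congr_fun h χ)

theorem forall_sum_mul_apply_eq_zero_iff {f : G → ℂ} :
    (∀ χ : G →* ℂˣ, ∑ g, f g * χ g = 0) ↔ f = 0 := by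
  classical
  refine ⟨fun h ↦ funext fun a ↦ ?_, fun h χ ↦ by simp [h]⟩
  have hG : (Fintype.card G : ℂ) ≠ 0 := Nat.cast_ne_zero.mpr Fintype.card_ne_zero
  refine (mul_eq_zero.mp ?_).resolve_left hG
  calc (Fintype.card G : ℂ) * f a
      = ∑ g, f g * ∑ χ : G →* ℂˣ, (χ (a⁻¹ * g) : ℂ) := by
        simp only [sum_dual_apply_eq_ite, inv_mul_eq_one, mul_ite, mul_zero, Finset.sum_ite_eq,
          Finset.mem_univ, if_true]
        ring
    _ = ∑ χ : G →* ℂˣ, (χ a⁻¹ : ℂ) * ∑ g, f g * χ g := by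
        simp only [Finset.mul_sum, map_mul, Units.val_mul]
        rw [Finset.sum_comm]
        exact Finset.sum_congr rfl fun _ _ ↦ Finset.sum_congr rfl fun _ _ ↦ by ring
    _ = 0 := by simp [h]

end MonoidHom

section CharSum

variable [CommGroup G]

theorem charSum_eq_sum_ite [Fintype G] (χ : G →* ℂˣ) (D : Set G) [DecidablePred (· ∈ D)] :
    charSum χ D = ∑ g, if g ∈ D then (χ g : ℂ) else 0 := by
  rw [charSum, finsum_mem_eq_toFinset_sum, ← Finset.sum_filter]
  congr 1
  ext
  simp

theorem charSum_inv (χ : G →* ℂˣ) (D : Set G) : charSum χ D⁻¹ = ∑ᶠ g ∈ D, (χ g⁻¹ : ℂ) := by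
  rw [charSum, ← Set.image_inv_eq_inv, finsum_mem_image inv_injective.injOn]

variable [Finite G]

theorem charSum_univ_of_ne_one {χ : G →* ℂˣ} (hχ : χ ≠ 1) : charSum χ Set.univ = 0 := by
  cases nonempty_fintype G
  rw [charSum, finsum_mem_univ, finsum_eq_sum_of_fintype, MonoidHom.sum_apply_units_eq_zero hχ]

theorem charSum_sdiff (χ : G →* ℂˣ) {s t : Set G} (hst : s ⊆ t) :
    charSum χ (t \ s) = charSum χ t - charSum χ s :=
  eq_sub_of_add_eq' (finsum_mem_add_sdiff hst t.toFinite)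

theorem charSum_insert (χ : G →* ℂˣ) {a : G} {s : Set G} (ha : a ∉ s) :
    charSum χ (insert a s) = χ a + charSum χ s :=
  finsum_mem_insert _ ha s.toFinite

theorem charSum_biUnion {ι : Type*} (χ : G →* ℂˣ) {P : ι → Set G} (I : Finset ι)
    (hP : (I : Set ι).PairwiseDisjoint P) :
    charSum χ (⋃ i ∈ I, P i) = ∑ i ∈ I, charSum χ (P i) := by
  rw [charSum, ← Finset.set_biUnion_coe, finsum_mem_biUnion hP I.finite_toSet
    fun i _ ↦ (P i).toFinite, finsum_mem_coe_finset]
  rfl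

theorem charSum_subgroup_eq_zero_or_eq_card (χ : G →* ℂˣ) (U : Subgroup G) :
    charSum χ U = 0 ∨ charSum χ U = Nat.card U := by
  classical
  cases nonempty_fintype G
  have hU : charSum χ U = ∑ u : U, (χ.comp U.subtype u : ℂ) := by
    rw [charSum, ← finsum_set_coe_eq_finsum_mem, finsum_eq_sum_of_fintype]
    rfl
  by_cases hχ : IsPrincipalOn χ U
  · right
    simp [hU, hχ _ (Subtype.mem _), Nat.card_eq_fintype_card]
  · left
    refine hU.trans (MonoidHom.sum_apply_units_eq_zero fun h ↦ hχ fun u hu ↦ ?_)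
    simpa using DFunLike.congr_fun h ⟨u, hu⟩

theorem charSum_one (D : Set G) : charSum 1 D = Nat.card D := by
  classical
  cases nonempty_fintype G
  simp [charSum, finsum_mem_eq_toFinset_sum]

end CharSum

section PairCount

variable [CommGroup G]

noncomputable def pairCount (D : Set G) (g : G) : ℕ :=
  Nat.card {p : G × G // p.1 ∈ D ∧ p.2 ∈ D ∧ p.1 * p.2⁻¹ = g}

theorem diffCount_eq_pairCount (D : Set G) {g : G} (hg : g ≠ 1) :
    diffCount D g = pairCount D g :=
  Nat.card_congr <| Equiv.subtypeEquivRight fun p ↦ by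
    refine ⟨fun ⟨h₁, h₂, _, h⟩ ↦ ⟨h₁, h₂, h⟩, fun ⟨h₁, h₂, h⟩ ↦ ⟨h₁, h₂, ?_, h⟩⟩
    rintro hp
    exact hg (by rw [← h, hp, mul_inv_cancel])

theorem pairCount_one (D : Set G) : pairCount D 1 = Nat.card D :=
  Nat.card_congr
    { toFun := fun p ↦ ⟨p.1.1, p.2.1⟩
      invFun := fun x ↦ ⟨(x, x), x.2, x.2, mul_inv_cancel _⟩
      left_inv := fun ⟨p, _, _, hp⟩ ↦ by
        have := mul_inv_eq_one.mp hp
        ext <;> simp [this]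
      right_inv := fun _ ↦ rfl }

theorem sum_pairCount_mul_apply [Fintype G] (D : Set G) (χ : G →* ℂˣ) :
    ∑ g, (pairCount D g : ℂ) * χ g = charSum χ D * charSum χ D⁻¹ := by
  classical
  set s := D.toFinset ×ˢ D.toFinset
  have hcount (g : G) : pairCount D g = #{p ∈ s | p.1 * p.2⁻¹ = g} := by
    rw [pairCount, Nat.card_eq_fintype_card, Fintype.card_subtype]
    congr 1
    ext p
    simp [s, and_assoc]
  calc ∑ g, (pairCount D g : ℂ) * χ g
      = ∑ g, ∑ p ∈ s with p.1 * p.2⁻¹ = g, (χ (p.1 * p.2⁻¹) : ℂ) := by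
        refine Finset.sum_congr rfl fun g _ ↦ ?_
        rw [hcount, Finset.sum_congr rfl fun p hp ↦ by rw [(Finset.mem_filter.mp hp).2],
          Finset.sum_const, nsmul_eq_mul]
    _ = ∑ p ∈ s, (χ p.1 : ℂ) * χ p.2⁻¹ := by
        rw [Finset.sum_fiberwise s (fun p ↦ p.1 * p.2⁻¹)]
        simp only [map_mul, Units.val_mul]
    _ = charSum χ D * charSum χ D⁻¹ := by
        rw [charSum_inv, charSum, finsum_mem_eq_toFinset_sum, finsum_mem_eq_toFinset_sum,
          Finset.sum_mul_sum, Finset.sum_product]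

end PairCount

section PDS

variable [CommGroup G] {D : Set G} {v k : ℕ} {l m : ℤ}

open scoped Classical in
theorem isRegularPDS_iff_pairCount (hG : Nat.card G = v) (hD : Nat.card D = k) (h1 : 1 ∉ D)
    (hinv : D⁻¹ = D) :
    IsRegularPDS D v k l m ↔ ∀ g, (pairCount D g : ℂ) =
      (k - m) * (if g = 1 then 1 else 0) + (l - m) * (if g ∈ D then 1 else 0) + m := by
  simp only [IsRegularPDS, IsPDS, hG, hD, h1, hinv, true_and, not_false_eq_true, and_true]
  refine ⟨fun h g ↦ ?_, fun h g hg ↦ ?_⟩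
  · by_cases hg : g = 1
    · simp [hg, h1, pairCount_one, hD]
    · rw [← diffCount_eq_pairCount D hg]
      by_cases hgD : g ∈ D
      · simpa [hg, hgD] using congrArg ((↑) : ℤ → ℂ) ((h g hg).1 hgD)
      · simpa [hg, hgD] using congrArg ((↑) : ℤ → ℂ) ((h g hg).2 hgD)
  · have := h g
    rw [← diffCount_eq_pairCount D hg] at this
    constructor <;> intro hgD <;> simp [hg, hgD] at this <;> exact_mod_cast this

variable [Finite G]

theorem isRegularPDS_iff_charSum_sq (hG : Nat.card G = v) (hD : Nat.card D = k) (h1 : 1 ∉ D)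
    (hinv : D⁻¹ = D) (hcount : (k : ℤ) * (k - 1) = l * k + m * (v - k - 1)) :
    IsRegularPDS D v k l m ↔
      ∀ χ : G →* ℂˣ, χ ≠ 1 → charSum χ D ^ 2 = (l - m) * charSum χ D + (k - m) := by
  classical
  cases nonempty_fintype G
  rw [isRegularPDS_iff_pairCount hG hD h1 hinv]
  set f : G → ℂ := fun g ↦ pairCount D g -
    ((k - m) * (if g = 1 then 1 else 0) + (l - m) * (if g ∈ D then 1 else 0) + m)
  have hf (χ : G →* ℂˣ) : ∑ g, f g * χ g =
      charSum χ D ^ 2 - ((l - m) * charSum χ D + (k - m) + m * ∑ g, (χ g : ℂ)) := by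
    simp only [f, charSum_eq_sum_ite, sub_mul, add_mul, Finset.sum_sub_distrib,
      Finset.sum_add_distrib, sum_pairCount_mul_apply, hinv, mul_assoc, ← Finset.mul_sum,
      ite_mul, one_mul, zero_mul, Finset.sum_ite_eq', Finset.mem_univ, if_true, map_one,
      Units.val_one]
    ring
  constructor
  · intro h χ hχ
    have hf0 : f = 0 := funext fun g ↦ sub_eq_zero.mpr (h g)
    have := hf χ
    simp only [hf0, Pi.zero_apply, zero_mul, Finset.sum_const_zero,
      MonoidHom.sum_apply_units_eq_zero hχ, mul_zero, add_zero] at this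
    linear_combination -this
  · intro h
    have hf0 : f = 0 := MonoidHom.forall_sum_mul_apply_eq_zero_iff.mp fun χ ↦ by
      rw [hf]
      rcases eq_or_ne χ 1 with rfl | hχ
      · have hv : (v : ℂ) = Fintype.card G := by rw [← hG, Nat.card_eq_fintype_card]
        simp only [charSum_one, hD, MonoidHom.one_apply, Units.val_one, Finset.sum_const,
          Finset.card_univ, nsmul_eq_mul, mul_one, ← hv]
        have hcount' : (k : ℂ) * (k - 1) = l * k + m * (v - k - 1) := by exact_mod_cast hcount
        linear_combination hcount'
      · rw [h χ hχ, MonoidHom.sum_apply_units_eq_zero hχ]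
        ring
    exact fun g ↦ sub_eq_zero.mp (congrFun hf0 g)

end PDS

section Latin

variable [CommGroup G] [Finite G] {D : Set G} {n r : ℕ}

theorem one_le_of_card_eq_sq (hG : Nat.card G = n ^ 2) : 1 ≤ n :=
  Nat.one_le_iff_ne_zero.mpr fun hn ↦ Nat.card_pos.ne' (by simpa [hn] using hG)

theorem isLatinPDS_iff_charSum (hG : Nat.card G = n ^ 2) (hD : Nat.card D = r * (n - 1))
    (h1 : 1 ∉ D) (hinv : D⁻¹ = D) :
    IsLatinPDS D n r ↔ ∀ χ : G →* ℂˣ, χ ≠ 1 → charSum χ D = -r ∨ charSum χ D = n - r := by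
  have hn := one_le_of_card_eq_sq hG
  rw [IsLatinPDS, isRegularPDS_iff_charSum_sq hG hD h1 hinv (by push_cast [Nat.cast_sub hn]; ring)]
  refine forall₂_congr fun χ _ ↦ ?_
  rw [← add_eq_zero_iff_eq_neg, ← sub_eq_zero (b := (n : ℂ) - r), ← mul_eq_zero]
  push_cast [Nat.cast_sub hn]
  constructor <;> intro h <;> linear_combination h

theorem IsLatinPDS.charSum_eq (h : IsLatinPDS D n r) {χ : G →* ℂˣ} (hχ : χ ≠ 1) :
    charSum χ D = -r ∨ charSum χ D = n - r :=
  (isLatinPDS_iff_charSum h.1.1 h.1.2.1 h.2.1 h.2.2).mp h χ hχ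

theorem IsLatinPDS.compl (h : IsLatinPDS D n r) (hr : r ≤ n + 1) :
    IsLatinPDS (insert 1 D)ᶜ n (n + 1 - r) := by
  have ⟨⟨hG, hD, _⟩, h1, hinv⟩ := h
  have hn := one_le_of_card_eq_sq hG
  refine (isLatinPDS_iff_charSum hG ?_ (by simp)
    (by simp [Set.compl_inv, Set.inv_insert, hinv])).mpr fun χ hχ ↦ ?_
  · rw [Nat.card_coe_set_eq, Set.ncard_compl, Set.ncard_insert_of_notMem h1,
      ← Nat.card_coe_set_eq, hD, hG]
    obtain ⟨s, hs⟩ := Nat.exists_eq_add_of_le hr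
    obtain ⟨m, rfl⟩ := Nat.exists_eq_add_of_le hn
    rw [hs, Nat.add_sub_cancel_left, add_tsub_cancel_left]
    refine Nat.sub_eq_of_eq_add ?_
    nlinarith [hs]
  · have hcompl : charSum χ (insert 1 D)ᶜ = -1 - charSum χ D := by
      rw [Set.compl_eq_univ_sdiff, charSum_sdiff _ (Set.subset_univ _), charSum_univ_of_ne_one hχ,
        charSum_insert _ h1, map_one, Units.val_one, zero_sub, neg_add']
    rw [hcompl]
    push_cast [Nat.cast_sub hr]
    rcases h.charSum_eq hχ with hD | hD
    · exact Or.inr (by rw [hD]; ring)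
    · exact Or.inl (by rw [hD]; ring)

end Latin

theorem sum_eq_zero_or_eq_of_subset {ι K : Type*} [Field K] [CharZero K] {s t : Finset ι}
    {f : ι → K} {a : K} (ha : a ≠ 0) (hst : s ⊆ t) (hf : ∀ i ∈ t, f i = 0 ∨ f i = a)
    (ht : ∑ i ∈ t, f i = 0 ∨ ∑ i ∈ t, f i = a) :
    ∑ i ∈ s, f i = 0 ∨ ∑ i ∈ s, f i = a := by
  classical
  have hsum (u : Finset ι) (hu : u ⊆ t) : ∑ i ∈ u, f i = #{i ∈ u | f i = a} * a := by
    rw [← nsmul_eq_mul, ← Finset.sum_const, Finset.sum_filter]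
    refine Finset.sum_congr rfl fun i hi ↦ ?_
    rcases hf i (hu hi) with h | h <;> simp [h, ha.symm]
  have hcard : #{i ∈ s | f i = a} ≤ 1 := by
    refine (Finset.card_le_card (Finset.filter_subset_filter _ hst)).trans ?_
    rw [hsum t le_rfl] at ht
    rcases ht with ht | ht
    · exact (Nat.cast_eq_zero.mp ((mul_eq_zero.mp ht).resolve_right ha)).le.trans zero_le_one
    · exact (Nat.cast_eq_one.mp (mul_eq_right₀ ha |>.mp ht)).le
  rw [hsum s hst]
  rcases Nat.le_one_iff_eq_zero_or_eq_one.mp hcard with h | h <;> simp [h]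

section Packing

variable [CommGroup G] {c t : ℕ} {P : Fin t → Set G} {U : Subgroup G}

theorem IsLPPacking.biUnion_union_eq_compl (h : IsLPPacking c t P U) (I : Finset (Fin t)) :
    (⋃ i ∈ I, P i) ∪ ((U : Set G) \ {1}) = (insert 1 (⋃ i ∈ Iᶜ, P i))ᶜ := by
  obtain ⟨-, -, -, hdisj, hcover⟩ := h
  have hmem (x : G) : (∃ i, x ∈ P i) ↔ x ∉ U := by simpa using Set.ext_iff.mp hcover x
  ext x
  by_cases hxU : x ∈ U
  · have : ∀ i, x ∉ P i := fun i hx ↦ (hmem x).mp ⟨i, hx⟩ hxU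
    simp [hxU, this]
  · obtain ⟨j, hj⟩ := (hmem x).mpr hxU
    have hx1 : x ≠ 1 := fun h ↦ hxU (h ▸ U.one_mem)
    have hP (i : Fin t) : x ∈ P i ↔ i = j :=
      ⟨fun hi ↦ by_contra fun hij ↦ Set.disjoint_left.mp (hdisj i j hij) hi hj, fun h ↦ h ▸ hj⟩
    simp [hxU, hx1, hP]

variable [Finite G]

theorem IsLPPacking.isLatinPDS_biUnion (h : IsLPPacking c t P U) (I : Finset (Fin t)) :
    IsLatinPDS (⋃ i ∈ I, P i) (t * c) (#I * c) := by
  obtain ⟨hG, hU, hP, hdisj, hcover⟩ := h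
  have hG' : Nat.card G = (t * c) ^ 2 := by rw [hG]; ring
  have hdisj' (J : Finset (Fin t)) : (J : Set (Fin t)).PairwiseDisjoint P :=
    fun i _ j _ hij ↦ hdisj i j hij
  refine (isLatinPDS_iff_charSum hG' ?_ ?_ ?_).mpr fun χ hχ ↦ ?_
  · rw [Nat.card_coe_set_eq, ← Finset.set_biUnion_coe,
      Set.Finite.ncard_biUnion I.finite_toSet (fun i _ ↦ (P i).toFinite) (hdisj' I),
      finsum_mem_coe_finset, Finset.sum_congr rfl fun i _ ↦ by
        rw [← Nat.card_coe_set_eq, (hP i).1.2.1], Finset.sum_const, smul_eq_mul, mul_assoc]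
  · simp [fun i ↦ (hP i).2.1]
  · simp [(hP _).2.2]
  · have hPχ (i : Fin t) : charSum χ (P i) + c = 0 ∨ charSum χ (P i) + c = t * c := by
      rcases (hP i).charSum_eq hχ with h | h
      · exact Or.inl (by rw [h]; ring)
      · exact Or.inr (by rw [h]; push_cast; ring)
    have htotal : ∑ i, (charSum χ (P i) + c) = 0 ∨ ∑ i, (charSum χ (P i) + c) = t * c := by
      have hsum : ∑ i, charSum χ (P i) = -charSum χ U := by
        rw [← charSum_biUnion χ _ (hdisj' _)]
        simp only [Finset.mem_univ, Set.iUnion_true, hcover]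
        rw [charSum_sdiff _ (Set.subset_univ _), charSum_univ_of_ne_one hχ, zero_sub]
      rw [Finset.sum_add_distrib, hsum, Finset.sum_const, Finset.card_univ, Fintype.card_fin,
        nsmul_eq_mul]
      rcases charSum_subgroup_eq_zero_or_eq_card χ U with hχU | hχU
      · exact Or.inr (by rw [hχU]; ring)
      · exact Or.inl (by rw [hχU, hU]; push_cast; ring)
    have htc : (t * c : ℂ) ≠ 0 := by
      exact_mod_cast Nat.one_le_iff_ne_zero.mp (one_le_of_card_eq_sq hG')
    rw [charSum_biUnion χ I (hdisj' I)]
    have := sum_eq_zero_or_eq_of_subset htc (Finset.subset_univ I) (fun i _ ↦ hPχ i) htotal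
    rw [Finset.sum_add_distrib, Finset.sum_const, nsmul_eq_mul] at this
    push_cast
    rcases this with h | h
    · exact Or.inl (by linear_combination h)
    · exact Or.inr (by linear_combination h)

end Packing

theorem stmt_6 {G : Type*} [CommGroup G] [Finite G] (c t : ℕ)
    (P : Fin t → Set G) (U : Subgroup G) (h : IsLPPacking c t P U)
    (I : Finset (Fin t)) (b : ℕ) (hb : I.card = b) :
    IsLatinPDS (⋃ i ∈ I, P i) (t * c) (b * c) ∧
    IsLatinPDS ((⋃ i ∈ I, P i) ∪ ((U : Set G) \ {1})) (t * c) (b * c + 1) := by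
  subst hb
  refine ⟨h.isLatinPDS_biUnion I, ?_⟩
  have hI : #I * c ≤ t * c := Nat.mul_le_mul_right c (by simpa using I.card_le_univ)
  have hIc : #Iᶜ * c = t * c - #I * c := by
    rw [Finset.card_compl, Fintype.card_fin, Nat.sub_mul]
  rw [h.biUnion_union_eq_compl I, show #I * c + 1 = t * c + 1 - #Iᶜ * c by omega]
  exact (h.isLatinPDS_biUnion Iᶜ).compl (by omega)
end
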